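/- arXiv:2107.10486 — 2 statements merged into one kernel-verified Lean document; each statement's English description precedes it below -/
import Mathlib

section
/- Let X be a C*-correspondence over A with universal covariant representation (Υ, t) generating the Cuntz-Pimsner algebra O_X. Then the map from X ⊗_A O_X to the closed subspace cl span{t(x)S : x ∈ X, S ∈ O_X} of O_X determined on elementary tensors by x ⊗ S ↦ t(x)S is an isomorphism of A–O_X correspondences. -/
/-!  Common framework: C*-correspondences, tensor products, representations,
Cuntz–Pimsner algebras, and the category `ECCor`, axiomatised as structures. -/

noncomputable section

universe u

/-- The closed linear span of a subset of a topological `ℂ`-module. -/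
def clspan {V : Type*} [AddCommMonoid V] [Module ℂ V] [TopologicalSpace V] (s : Set V) : Set V :=
  closure ((Submodule.span ℂ s : Submodule ℂ V) : Set V)

/-- A (nondegenerate) C*-correspondence from `A` to `B`: a right Hilbert `B`-module `X`
equipped with a left action of `A` by adjointable operators, such that `A · X` is dense. -/
structure Corr (A : Type u) (B : Type u)
    [NonUnitalCStarAlgebra A] [NonUnitalCStarAlgebra B] : Type (u + 1) where
  /-- the underlying module -/
  X : Type u
  [nacg : NormedAddCommGroup X]
  [nsp : NormedSpace ℂ X]
  [cs : CompleteSpace X]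
  /-- the `B`-valued inner product `⟨·,·⟩_B` -/
  ip : X → X → B
  /-- the right action of `B` -/
  sm : X → B → X
  /-- the left action of `A` -/
  la : A → X → X
  sm_add : ∀ (x y : X) (b : B), sm (x + y) b = sm x b + sm y b
  sm_add' : ∀ (x : X) (b c : B), sm x (b + c) = sm x b + sm x c
  sm_mul : ∀ (x : X) (b c : B), sm (sm x b) c = sm x (b * c)
  sm_smul : ∀ (z : ℂ) (x : X) (b : B), sm (z • x) b = z • sm x b
  sm_smul' : ∀ (z : ℂ) (x : X) (b : B), sm x (z • b) = z • sm x b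
  sm_bound : ∀ (x : X) (b : B), ‖sm x b‖ ≤ ‖x‖ * ‖b‖
  ip_add : ∀ (x y z : X), ip x (y + z) = ip x y + ip x z
  ip_smul : ∀ (z : ℂ) (x y : X), ip x (z • y) = z • ip x y
  ip_star : ∀ (x y : X), star (ip x y) = ip y x
  ip_sm : ∀ (x y : X) (b : B), ip x (sm y b) = ip x y * b
  ip_pos : ∀ x : X, ∃ b : B, ip x x = star b * b
  ip_norm : ∀ x : X, ‖x‖ ^ 2 = ‖ip x x‖
  ip_bound : ∀ x y : X, ‖ip x y‖ ≤ ‖x‖ * ‖y‖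
  la_add : ∀ (a : A) (x y : X), la a (x + y) = la a x + la a y
  la_smul : ∀ (a : A) (z : ℂ) (x : X), la a (z • x) = z • la a x
  la_add' : ∀ (a b : A) (x : X), la (a + b) x = la a x + la b x
  la_mul : ∀ (a b : A) (x : X), la (a * b) x = la a (la b x)
  la_smul' : ∀ (z : ℂ) (a : A) (x : X), la (z • a) x = z • la a x
  la_adj : ∀ (a : A) (x y : X), ip (la a x) y = ip x (la (star a) y)
  la_bound : ∀ (a : A) (x : X), ‖la a x‖ ≤ ‖a‖ * ‖x‖
  la_sm : ∀ (a : A) (x : X) (b : B), la a (sm x b) = sm (la a x) b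
  /-- nondegeneracy: `A · X` is dense in `X` -/
  nondeg : clspan {y : X | ∃ (a : A) (x : X), y = la a x} = Set.univ

attribute [instance] Corr.nacg Corr.nsp Corr.cs

namespace Corr

variable {A B : Type u} [NonUnitalCStarAlgebra A] [NonUnitalCStarAlgebra B]

/-- The left action, as a continuous linear operator. -/
def lmul (E : Corr A B) (a : A) : E.X →L[ℂ] E.X :=
  LinearMap.mkContinuous
    { toFun := E.la a
      map_add' := E.la_add a
      map_smul' := fun z x => E.la_smul a z x }
    ‖a‖ (E.la_bound a)

/-- The rank-one operator `θ_{x,y} : z ↦ x · ⟨y, z⟩_B`. -/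
def rankOne (E : Corr A B) (x y : E.X) : E.X →L[ℂ] E.X :=
  LinearMap.mkContinuous
    { toFun := fun z => E.sm x (E.ip y z)
      map_add' := fun u v => by
        show E.sm x (E.ip y (u + v)) = E.sm x (E.ip y u) + E.sm x (E.ip y v)
        rw [E.ip_add, E.sm_add']
      map_smul' := fun c u => by
        show E.sm x (E.ip y (c • u)) = c • E.sm x (E.ip y u)
        rw [E.ip_smul, E.sm_smul'] }
    (‖x‖ * ‖y‖)
    (fun z => by
      calc ‖E.sm x (E.ip y z)‖ ≤ ‖x‖ * ‖E.ip y z‖ := E.sm_bound _ _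
        _ ≤ ‖x‖ * (‖y‖ * ‖z‖) :=
            mul_le_mul_of_nonneg_left (E.ip_bound y z) (norm_nonneg x)
        _ = ‖x‖ * ‖y‖ * ‖z‖ := (mul_assoc _ _ _).symm)

/-- The compact operators `K(X)`: the closed linear span of the rank-one operators. -/
def compacts (E : Corr A B) : Set (E.X →L[ℂ] E.X) :=
  clspan (Set.range fun p : E.X × E.X => E.rankOne p.1 p.2)

/-- A correspondence is injective if its left action is injective. -/
def Injective (E : Corr A B) : Prop := Function.Injective E.lmul

/-- A correspondence is regular if its left action is injective with values in the compacts. -/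
def Regular (E : Corr A B) : Prop :=
  Function.Injective E.lmul ∧ ∀ a : A, E.lmul a ∈ E.compacts

/-- Katsura's ideal `J_X = φ_X⁻¹(K(X)) ∩ (ker φ_X)^⊥` of a correspondence over `A`. -/
def katsuraIdeal {A : Type u} [NonUnitalCStarAlgebra A] (E : Corr A A) : Set A :=
  {a : A | E.lmul a ∈ E.compacts ∧ ∀ b : A, E.lmul b = 0 → a * b = 0}

/-- The closed submodule `M · J` of `M` determined by a subset `J ⊆ B`. -/
def smSet (M : Corr A B) (J : Set B) : Set M.X :=
  clspan {ξ : M.X | ∃ (m : M.X) (b : B), b ∈ J ∧ ξ = M.sm m b}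

/-- A pair of operators on a correspondence which are adjoint to each other. -/
def IsAdjointPair (W : Corr A B) (T S : W.X →L[ℂ] W.X) : Prop :=
  ∀ ξ η : W.X, W.ip (T ξ) η = W.ip ξ (S η)

end Corr

/-- The condition `J_X · M ⊆ M · J_Y` on an `A–B` correspondence `M`,
relative to correspondences `X` over `A` and `Y` over `B`. -/
def KatsuraCompat {A B : Type u} [NonUnitalCStarAlgebra A] [NonUnitalCStarAlgebra B]
    (E : Corr A A) (M : Corr A B) (F : Corr B B) : Prop :=
  ∀ a ∈ E.katsuraIdeal, ∀ m : M.X, M.la a m ∈ M.smSet F.katsuraIdeal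

/-- An isomorphism of `A–B` correspondences. -/
structure CorrIso {A B : Type u} [NonUnitalCStarAlgebra A] [NonUnitalCStarAlgebra B]
    (E F : Corr A B) where
  toFun : E.X → F.X
  invFun : F.X → E.X
  left_inv : Function.LeftInverse invFun toFun
  right_inv : Function.RightInverse invFun toFun
  map_add : ∀ x y : E.X, toFun (x + y) = toFun x + toFun y
  map_smul : ∀ (c : ℂ) (x : E.X), toFun (c • x) = c • toFun x
  map_la : ∀ (a : A) (x : E.X), toFun (E.la a x) = F.la a (toFun x)
  map_ip : ∀ x y : E.X, F.ip (toFun x) (toFun y) = E.ip x y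

/-- Witness that the correspondence `T` *is* the balanced tensor product `E ⊗_B F`,
via the bilinear map `mk2 : (x, y) ↦ x ⊗ y`. -/
structure TensorData {A B C : Type u} [NonUnitalCStarAlgebra A] [NonUnitalCStarAlgebra B]
    [NonUnitalCStarAlgebra C] (E : Corr A B) (F : Corr B C) (T : Corr A C) where
  mk2 : E.X → F.X → T.X
  add_l : ∀ (x x' : E.X) (y : F.X), mk2 (x + x') y = mk2 x y + mk2 x' y
  add_r : ∀ (x : E.X) (y y' : F.X), mk2 x (y + y') = mk2 x y + mk2 x y'
  smul_l : ∀ (c : ℂ) (x : E.X) (y : F.X), mk2 (c • x) y = c • mk2 x y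
  smul_r : ∀ (c : ℂ) (x : E.X) (y : F.X), mk2 x (c • y) = c • mk2 x y
  balanced : ∀ (x : E.X) (b : B) (y : F.X), mk2 (E.sm x b) y = mk2 x (F.la b y)
  ip_mk : ∀ (x x' : E.X) (y y' : F.X),
    T.ip (mk2 x y) (mk2 x' y') = F.ip y (F.la (E.ip x x') y')
  la_mk : ∀ (a : A) (x : E.X) (y : F.X), T.la a (mk2 x y) = mk2 (E.la a x) y
  sm_mk : ∀ (x : E.X) (y : F.X) (c : C), T.sm (mk2 x y) c = mk2 x (F.sm y c)
  dense : clspan (Set.range fun p : E.X × F.X => mk2 p.1 p.2) = Set.univ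

/-- Witness that `C` is the `A–D` correspondence obtained from the C*-algebra `D`
by letting `A` act on the left through the map `ψ : A → D` (e.g. the identity
correspondence when `D = A` and `ψ = id`). -/
structure PullCorr {A D : Type u} [NonUnitalCStarAlgebra A] [NonUnitalCStarAlgebra D]
    (ψ : A → D) (C : Corr A D) where
  u : D → C.X
  bij : Function.Bijective u
  add : ∀ d d' : D, u (d + d') = u d + u d'
  smul : ∀ (c : ℂ) (d : D), u (c • d) = c • u d
  ip : ∀ d d' : D, C.ip (u d) (u d') = star d * d'
  la : ∀ (a : A) (d : D), C.la a (u d) = u (ψ a * d)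
  sm : ∀ d d' : D, C.sm (u d) d' = u (d * d')

/-- Witness that `W'` is the `C–D` correspondence obtained from the `B–D` correspondence `W`
by transferring the left action along a homomorphism `σ : C → L(W)`. -/
structure ReCorr {B C D : Type u} [NonUnitalCStarAlgebra B] [NonUnitalCStarAlgebra C]
    [NonUnitalCStarAlgebra D] (W : Corr B D) (σ : C → (W.X →L[ℂ] W.X)) (W' : Corr C D) where
  w : W.X → W'.X
  bij : Function.Bijective w
  add : ∀ ξ η : W.X, w (ξ + η) = w ξ + w η
  smul : ∀ (c : ℂ) (ξ : W.X), w (c • ξ) = c • w ξ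
  ip_eq : ∀ ξ η : W.X, W'.ip (w ξ) (w η) = W.ip ξ η
  sm_eq : ∀ (ξ : W.X) (d : D), w (W.sm ξ d) = W'.sm (w ξ) d
  la_eq : ∀ (c : C) (ξ : W.X), W'.la c (w ξ) = w (σ c ξ)

/-- The structure of an `A–B` imprimitivity bimodule on an `A–B` correspondence `M`:
a compatible left `A`-valued inner product, full on both sides. -/
structure ImpData {A B : Type u} [NonUnitalCStarAlgebra A] [NonUnitalCStarAlgebra B]
    (M : Corr A B) where
  lip : M.X → M.X → A
  lip_add : ∀ x y z : M.X, lip (x + y) z = lip x z + lip y z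
  lip_smul : ∀ (c : ℂ) (x y : M.X), lip (c • x) y = c • lip x y
  lip_star : ∀ x y : M.X, star (lip x y) = lip y x
  lip_la : ∀ (a : A) (x y : M.X), lip (M.la a x) y = a * lip x y
  lip_pos : ∀ x : M.X, ∃ a : A, lip x x = star a * a
  compat : ∀ x y z : M.X, M.la (lip x y) z = M.sm x (M.ip y z)
  full_left : clspan {a : A | ∃ x y : M.X, a = lip x y} = Set.univ
  full_right : clspan {b : B | ∃ x y : M.X, b = M.ip x y} = Set.univ

/-- Witness that the `B–A` correspondence `N` is the dual (conjugate) imprimitivity bimodule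
of the `A–B` imprimitivity bimodule `M`. -/
structure DualData {A B : Type u} [NonUnitalCStarAlgebra A] [NonUnitalCStarAlgebra B]
    (M : Corr A B) (imp : ImpData M) (N : Corr B A) where
  d : M.X → N.X
  bij : Function.Bijective d
  add : ∀ x y : M.X, d (x + y) = d x + d y
  conj_smul : ∀ (c : ℂ) (x : M.X), d (c • x) = (starRingEnd ℂ c) • d x
  la_eq : ∀ (b : B) (x : M.X), N.la b (d x) = d (M.sm x (star b))
  sm_eq : ∀ (x : M.X) (a : A), N.sm (d x) a = d (M.la (star a) x)
  ip_eq : ∀ x y : M.X, N.ip (d x) (d y) = imp.lip x y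

/-- Witness that `X` (a correspondence over `A`) is a nondegenerate subcorrespondence of
`Y` (a correspondence over `B`), via `(φ̇, ϕ)`. -/
structure SubCorr {A B : Type u} [NonUnitalCStarAlgebra A] [NonUnitalCStarAlgebra B]
    (E : Corr A A) (F : Corr B B) where
  φd : E.X → F.X
  φd_inj : Function.Injective φd
  φd_add : ∀ x y : E.X, φd (x + y) = φd x + φd y
  φd_smul : ∀ (c : ℂ) (x : E.X), φd (c • x) = c • φd x
  ϕ : A → B
  ϕ_inj : Function.Injective ϕ
  ϕ_add : ∀ a b : A, ϕ (a + b) = ϕ a + ϕ b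
  ϕ_mul : ∀ a b : A, ϕ (a * b) = ϕ a * ϕ b
  ϕ_star : ∀ a : A, ϕ (star a) = star (ϕ a)
  ϕ_smul : ∀ (c : ℂ) (a : A), ϕ (c • a) = c • ϕ a
  ϕ_nondeg : clspan {b : B | ∃ (a : A) (c : B), b = ϕ a * c} = Set.univ
  la_eq : ∀ (a : A) (x : E.X), φd (E.la a x) = F.la (ϕ a) (φd x)
  ip_eq : ∀ x y : E.X, F.ip (φd x) (φd y) = ϕ (E.ip x y)
  dense : clspan {y : F.X | ∃ (x : E.X) (b : B), y = F.sm (φd x) b} = Set.univ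

/-- A representation `(π, t)` of a correspondence `X` over `A` on a C*-algebra `D`. -/
structure CorrRep {A : Type u} [NonUnitalCStarAlgebra A] (E : Corr A A)
    (D : Type u) [NonUnitalCStarAlgebra D] where
  π : A → D
  t : E.X → D
  π_add : ∀ a b : A, π (a + b) = π a + π b
  π_mul : ∀ a b : A, π (a * b) = π a * π b
  π_star : ∀ a : A, π (star a) = star (π a)
  π_smul : ∀ (c : ℂ) (a : A), π (c • a) = c • π a
  t_add : ∀ x y : E.X, t (x + y) = t x + t y
  t_smul : ∀ (c : ℂ) (x : E.X), t (c • x) = c • t x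
  mul_t : ∀ (a : A) (x : E.X), π a * t x = t (E.la a x)
  t_mul : ∀ x y : E.X, star (t x) * t y = π (E.ip x y)

/-- Covariance of a representation on the Katsura ideal:
`π(a) = Ψ_t(φ_X(a))` for `a ∈ J_X`, expressed by simultaneous approximation of
`φ_X(a)` by finite-rank operators and of `π(a)` by the corresponding finite sums. -/
def CorrRep.Covariant {A : Type u} [NonUnitalCStarAlgebra A] {E : Corr A A}
    {D : Type u} [NonUnitalCStarAlgebra D] (R : CorrRep E D) : Prop :=
  ∀ a ∈ E.katsuraIdeal, ∀ ε > (0 : ℝ), ∃ (k : ℕ) (x y : Fin k → E.X),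
    ‖E.lmul a - ∑ i, E.rankOne (x i) (y i)‖ < ε ∧
    ‖R.π a - ∑ i, R.t (x i) * star (R.t (y i))‖ < ε

/-- The products `t(x₁)⋯t(xₙ)`, i.e. `t^n` applied to elementary tensors. -/
def CorrRep.tProd {A : Type u} [NonUnitalCStarAlgebra A] {E : Corr A A}
    {D : Type u} [NonUnitalCStarAlgebra D] (R : CorrRep E D) :
    (n : ℕ) → (Fin (n + 1) → E.X) → D
  | 0, x => R.t (x 0)
  | (k + 1), x => R.t (x 0) * R.tProd k (fun i => x i.succ)

/-- A Cuntz–Pimsner algebra for `X`: a C*-algebra `O` with a universal injective covariant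
representation of `X`, generated by the image of that representation. -/
structure CuntzPimsner {A : Type u} [NonUnitalCStarAlgebra A] (E : Corr A A) :
    Type (u + 1) where
  O : Type u
  [str : NonUnitalCStarAlgebra O]
  rep : CorrRep E O
  covariant : rep.Covariant
  injective : Function.Injective rep.π
  generates :
    Dense ((NonUnitalStarAlgebra.adjoin ℂ (Set.range rep.π ∪ Set.range rep.t) :
      NonUnitalStarSubalgebra ℂ O) : Set O)
  universal : ∀ (D : Type u) [NonUnitalCStarAlgebra D] (R : CorrRep E D), R.Covariant →
    ∃ ρ : O → D, Continuous ρ ∧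
      (∀ p q : O, ρ (p + q) = ρ p + ρ q) ∧
      (∀ (c : ℂ) (p : O), ρ (c • p) = c • ρ p) ∧
      (∀ p q : O, ρ (p * q) = ρ p * ρ q) ∧
      (∀ p : O, ρ (star p) = star (ρ p)) ∧
      (∀ a : A, ρ (rep.π a) = R.π a) ∧
      (∀ x : E.X, ρ (rep.t x) = R.t x)

attribute [instance] CuntzPimsner.str

/-- The gauge action of the circle on a Cuntz–Pimsner algebra. -/
structure GaugeAction {A : Type u} [NonUnitalCStarAlgebra A] {E : Corr A A}
    (CP : CuntzPimsner E) where
  g : ℂ → CP.O → CP.O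
  g_add : ∀ z : ℂ, ‖z‖ = 1 → ∀ S T : CP.O, g z (S + T) = g z S + g z T
  g_smul : ∀ z : ℂ, ‖z‖ = 1 → ∀ (c : ℂ) (S : CP.O), g z (c • S) = c • g z S
  g_mul : ∀ z : ℂ, ‖z‖ = 1 → ∀ S T : CP.O, g z (S * T) = g z S * g z T
  g_star : ∀ z : ℂ, ‖z‖ = 1 → ∀ S : CP.O, g z (star S) = star (g z S)
  g_comp : ∀ z w : ℂ, ‖z‖ = 1 → ‖w‖ = 1 → ∀ S : CP.O, g (z * w) S = g z (g w S)
  g_one : ∀ S : CP.O, g 1 S = S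
  g_cont : ∀ S : CP.O, Continuous fun z : {z : ℂ // ‖z‖ = 1} => g z.1 S
  g_π : ∀ z : ℂ, ‖z‖ = 1 → ∀ a : A, g z (CP.rep.π a) = CP.rep.π a
  g_t : ∀ z : ℂ, ‖z‖ = 1 → ∀ x : E.X, g z (CP.rep.t x) = z • CP.rep.t x

/-- The data of a morphism `X → Y` in the category `ECCor`: a regular `A–B` correspondence
`M` with `J_X · M ⊆ M · J_Y`, together with a correspondence isomorphism
`U : X ⊗_A M → M ⊗_B Y`. -/
structure EMor {A B : Type u} [NonUnitalCStarAlgebra A] [NonUnitalCStarAlgebra B]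
    (E : Corr A A) (F : Corr B B) : Type (u + 1) where
  M : Corr A B
  regular : M.Regular
  kat : KatsuraCompat E M F
  TXM : Corr A B
  tdXM : TensorData E M TXM
  TMY : Corr A B
  tdMY : TensorData M F TMY
  U : CorrIso TXM TMY

/-- Two morphism data `(M, U_M)` and `(M', U_{M'})` are isomorphic:
there is an isomorphism `ξ : M → M'` with `U_{M'} ∘ (1_X ⊗ ξ) = (ξ ⊗ 1_Y) ∘ U_M`. -/
def EMorEquiv {A B : Type u} [NonUnitalCStarAlgebra A] [NonUnitalCStarAlgebra B]
    {E : Corr A A} {F : Corr B B} (m m' : EMor E F) : Prop :=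
  ∃ ξ : CorrIso m.M m'.M,
  ∃ Ξ : m.TMY.X → m'.TMY.X,
    (∀ ζ η, Ξ (ζ + η) = Ξ ζ + Ξ η) ∧
    (∀ (c : ℂ) ζ, Ξ (c • ζ) = c • Ξ ζ) ∧
    Continuous Ξ ∧
    (∀ (mm : m.M.X) (y : F.X), Ξ (m.tdMY.mk2 mm y) = m'.tdMY.mk2 (ξ.toFun mm) y) ∧
    (∀ (x : E.X) (mm : m.M.X),
      m'.U.toFun (m'.tdXM.mk2 x (ξ.toFun mm)) = Ξ (m.U.toFun (m.tdXM.mk2 x mm)))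

/-- `p` is a composite of `m : X → Y` and `n : Y → Z` in `ECCor`:
`p.M = M ⊗_B N` and `U_P = (1_M ⊗ U_N)(U_M ⊗ 1_N)` modulo the canonical identifications. -/
def EIsComposite {A B C : Type u} [NonUnitalCStarAlgebra A] [NonUnitalCStarAlgebra B]
    [NonUnitalCStarAlgebra C] {E : Corr A A} {F : Corr B B} {G : Corr C C}
    (m : EMor E F) (n : EMor F G) (p : EMor E G) : Prop :=
  ∃ td : TensorData m.M n.M p.M,
  ∃ Ξ : m.M.X → n.TMY.X → p.TMY.X,       -- m ⊗ (n ⊗ z) ↦ (m ⊗ n) ⊗ z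
  ∃ Θ : m.TMY.X → n.M.X → p.TMY.X,       -- (m ⊗ y) ⊗ n ↦ m ⊗ U_N(y ⊗ n)
    (∀ mm : m.M.X, (∀ ζ η, Ξ mm (ζ + η) = Ξ mm ζ + Ξ mm η) ∧
      (∀ (c : ℂ) ζ, Ξ mm (c • ζ) = c • Ξ mm ζ) ∧ Continuous (Ξ mm)) ∧
    (∀ (mm : m.M.X) (nn : n.M.X) (z : G.X),
      Ξ mm (n.tdMY.mk2 nn z) = p.tdMY.mk2 (td.mk2 mm nn) z) ∧
    (∀ nn : n.M.X, (∀ ζ η, Θ (ζ + η) nn = Θ ζ nn + Θ η nn) ∧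
      (∀ (c : ℂ) ζ, Θ (c • ζ) nn = c • Θ ζ nn) ∧ Continuous (fun ζ => Θ ζ nn)) ∧
    (∀ (mm : m.M.X) (y : F.X) (nn : n.M.X),
      Θ (m.tdMY.mk2 mm y) nn = Ξ mm (n.U.toFun (n.tdXM.mk2 y nn))) ∧
    (∀ (x : E.X) (mm : m.M.X) (nn : n.M.X),
      p.U.toFun (p.tdXM.mk2 x (td.mk2 mm nn)) = Θ (m.U.toFun (m.tdXM.mk2 x mm)) nn)

/-- `e` is an identity morphism on `X` in `ECCor`: `e.M` is the identity correspondence `A`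
and `U_A = i_l⁻¹ ∘ i_r : X ⊗_A A → A ⊗_A X`, i.e. `i_l (U_A (x ⊗ a)) = x · a`. -/
def EIsIdentity {A : Type u} [NonUnitalCStarAlgebra A] {E : Corr A A}
    (e : EMor E E) : Prop :=
  ∃ idd : PullCorr (fun a : A => a) e.M,
  ∃ il : e.TMY.X → E.X,
    (∀ ζ η, il (ζ + η) = il ζ + il η) ∧
    (∀ (c : ℂ) ζ, il (c • ζ) = c • il ζ) ∧
    Continuous il ∧
    Function.Injective il ∧
    (∀ (a : A) (x : E.X), il (e.tdMY.mk2 (idd.u a) x) = E.la a x) ∧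
    (∀ (x : E.X) (a : A), il (e.U.toFun (e.tdXM.mk2 x (idd.u a))) = E.sm x a)

/-- A morphism in `ECCor` is an isomorphism: it has a two-sided inverse up to
isomorphism of morphism data. -/
def EIsEIso {A B : Type u} [NonUnitalCStarAlgebra A] [NonUnitalCStarAlgebra B]
    {E : Corr A A} {F : Corr B B} (m : EMor E F) : Prop :=
  ∃ (n : EMor F E) (p : EMor E E) (q : EMor F F) (e : EMor E E) (f : EMor F F),
    EIsComposite m n p ∧ EIsIdentity e ∧ EMorEquiv p e ∧
    EIsComposite n m q ∧ EIsIdentity f ∧ EMorEquiv q f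

/-- The standing data for the C-covariant representation of `X` on `K(M ⊗_B O_Y)`
associated with a morphism `[M, U_M] : X → Y` in `ECCor`:  `O_Y` regarded as a
`B–O_Y` correspondence, the tensor product `W = M ⊗_B O_Y`, the canonical map
`Λ : (M ⊗_B Y) × O_Y → W`, `(m ⊗ y, S) ↦ m ⊗ t_Y(y)S`, and the operators
`Φ(x) = (1_M ⊗ V_Y)(T(x) ⊗ 1_{O_Y})`. -/
structure CCovSetup {A B : Type u} [NonUnitalCStarAlgebra A] [NonUnitalCStarAlgebra B]
    {E : Corr A A} {F : Corr B B} (m : EMor E F) (CPY : CuntzPimsner F) :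
    Type (u + 1) where
  OYc : Corr B CPY.O
  pcY : PullCorr CPY.rep.π OYc
  W : Corr A CPY.O
  tdW : TensorData m.M OYc W
  Λ : m.TMY.X → CPY.O → W.X
  Λ_add : ∀ (S : CPY.O) (ζ η : m.TMY.X), Λ (ζ + η) S = Λ ζ S + Λ η S
  Λ_smul : ∀ (S : CPY.O) (c : ℂ) (ζ : m.TMY.X), Λ (c • ζ) S = c • Λ ζ S
  Λ_cont : ∀ S : CPY.O, Continuous fun ζ => Λ ζ S
  Λ_mk : ∀ (mm : m.M.X) (y : F.X) (S : CPY.O),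
    Λ (m.tdMY.mk2 mm y) S = tdW.mk2 mm (pcY.u (CPY.rep.t y * S))
  Φ : E.X → (W.X →L[ℂ] W.X)
  Φ_mk : ∀ (x : E.X) (mm : m.M.X) (S : CPY.O),
    Φ x (tdW.mk2 mm (pcY.u S)) = Λ (m.U.toFun (m.tdXM.mk2 x mm)) S

/-- The homomorphism `σ : O_X → K(M ⊗_B O_Y) ⊆ L(M ⊗_B O_Y)` induced by
the C-covariant representation. -/
structure SigmaData {A B : Type u} [NonUnitalCStarAlgebra A] [NonUnitalCStarAlgebra B]
    {E : Corr A A} {F : Corr B B} {m : EMor E F} {CPY : CuntzPimsner F}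
    (st : CCovSetup m CPY) (CPX : CuntzPimsner E) where
  σ : CPX.O → (st.W.X →L[ℂ] st.W.X)
  σ_add : ∀ S T : CPX.O, σ (S + T) = σ S + σ T
  σ_smul : ∀ (c : ℂ) (S : CPX.O), σ (c • S) = c • σ S
  σ_mul : ∀ S T : CPX.O, σ (S * T) = (σ S).comp (σ T)
  σ_star : ∀ S : CPX.O, st.W.IsAdjointPair (σ S) (σ (star S))
  σ_cont : Continuous σ
  σ_t : ∀ x : E.X, σ (CPX.rep.t x) = st.Φ x
  σ_π : ∀ a : A, σ (CPX.rep.π a) = st.W.lmul a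

/-- A bundled C*-correspondence over a C*-algebra. -/
structure BCorr : Type (u + 1) where
  alg : Type u
  [str : NonUnitalCStarAlgebra alg]
  cor : Corr alg alg

attribute [instance] BCorr.str

/-- Elementary strong shift equivalence through *regular* correspondences `R`, `S`:
`X ≅ R ⊗_B S` and `Y ≅ S ⊗_A R`. -/
def ElemSSERegular (E F : BCorr) : Prop :=
  ∃ (R : Corr E.alg F.alg) (S : Corr F.alg E.alg)
    (T₁ : Corr E.alg E.alg) (_ : TensorData R S T₁)
    (T₂ : Corr F.alg F.alg) (_ : TensorData S R T₂),
    R.Regular ∧ S.Regular ∧ Nonempty (CorrIso T₁ E.cor) ∧ Nonempty (CorrIso T₂ F.cor)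

/-- Strong shift equivalence (with all intermediate data regular). -/
def StrongSSERegular (E F : BCorr) : Prop :=
  ∃ (n : ℕ) (Z : Fin (n + 1) → BCorr),
    Z 0 = E ∧ Z (Fin.last n) = F ∧
    (∀ i, (Z i).cor.Regular) ∧
    ∀ i : Fin n, ElemSSERegular (Z i.castSucc) (Z i.succ)

/-- The tower of tensor powers `X^{⊗ k}` of a correspondence `X` over `A`
(with `X^{⊗ 0} = A`), together with the "append on the right" maps
`X^{⊗ k} × X → X^{⊗ (k+1)}`. -/
structure PowerTower {A : Type u} [NonUnitalCStarAlgebra A] (E : Corr A A) :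
    Type (u + 1) where
  P : ℕ → Corr A A
  zero : PullCorr (fun a : A => a) (P 0)
  step : ∀ k : ℕ, TensorData E (P k) (P (k + 1))
  app : ∀ k : ℕ, (P k).X → E.X → (P (k + 1)).X
  app_add : ∀ (k : ℕ) (y : E.X) (w w' : (P k).X), app k (w + w') y = app k w y + app k w' y
  app_smul : ∀ (k : ℕ) (y : E.X) (c : ℂ) (w : (P k).X), app k (c • w) y = c • app k w y
  app_cont : ∀ (k : ℕ) (y : E.X), Continuous fun w => app k w y
  app_base : ∀ (a : A) (y : E.X) (b : A),
    (P 1).sm (app 0 (zero.u a) y) b = (step 0).mk2 (E.la a y) (zero.u b)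
  app_step : ∀ (k : ℕ) (x : E.X) (w : (P k).X) (y : E.X),
    app (k + 1) ((step k).mk2 x w) y = (step (k + 1)).mk2 x (app k w y)

end

noncomputable section

universe u

/-! The map `x ⊗ S ↦ t(x)S` preserves the `O_X`-valued inner products of elementary tensors,
because `t(x)* t(x') = Υ(⟨x, x'⟩)`. In a C*-algebra `‖c‖² = ‖c* c‖`, so its linear extension to
finite sums of elementary tensors is isometric; hence it is well defined, extends by continuity
to an isometry on `X ⊗_A O_X`, and its range is the closure of the span of the `t(x)S`.
Compatibility with both actions holds on elementary tensors, hence everywhere by density. -/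

open Set Submodule Finsupp

namespace Corr

variable {A B : Type u} [NonUnitalCStarAlgebra A] [NonUnitalCStarAlgebra B] (E : Corr A B)

theorem ip_add_left (x y z : E.X) : E.ip (x + y) z = E.ip x z + E.ip y z := by
  rw [← E.ip_star, E.ip_add, star_add, E.ip_star, E.ip_star]

theorem ip_sub_left (x y z : E.X) : E.ip (x - y) z = E.ip x z - E.ip y z := by
  rw [eq_sub_iff_add_eq, ← ip_add_left, sub_add_cancel]

theorem ip_zero_left (y : E.X) : E.ip 0 y = 0 := by
  simpa using E.ip_sub_left 0 0 y

theorem ip_smul_left (c : ℂ) (x y : E.X) : E.ip (c • x) y = starRingEnd ℂ c • E.ip x y := by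
  rw [← E.ip_star, E.ip_smul, star_smul, E.ip_star]
  rfl

def ipRight (ζ : E.X) : E.X →L[ℂ] B :=
  LinearMap.mkContinuous
    { toFun := E.ip ζ
      map_add' := E.ip_add ζ
      map_smul' := fun c η => E.ip_smul c ζ η }
    ‖ζ‖ (E.ip_bound ζ)

theorem ipRight_apply (ζ η : E.X) : E.ipRight ζ η = E.ip ζ η := rfl

theorem lipschitzWith_ipRight : LipschitzWith 1 E.ipRight := by
  refine LipschitzWith.of_dist_le_mul fun ζ ζ' => ?_
  have hsub : E.ipRight ζ - E.ipRight ζ' = E.ipRight (ζ - ζ') := by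
    ext η
    simp only [_root_.sub_apply, ipRight_apply, ip_sub_left]
  rw [dist_eq_norm, dist_eq_norm, hsub, NNReal.coe_one, one_mul]
  exact LinearMap.mkContinuous_norm_le _ (norm_nonneg _) _

theorem continuous_ip : Continuous fun p : E.X × E.X => E.ip p.1 p.2 :=
  (E.lipschitzWith_ipRight.continuous.comp continuous_fst).clm_apply continuous_snd

def rmul (b : B) : E.X →L[ℂ] E.X :=
  LinearMap.mkContinuous
    { toFun := fun x => E.sm x b
      map_add' := fun x y => E.sm_add x y b
      map_smul' := fun c x => E.sm_smul c x b }
    ‖b‖ (fun x => by rw [mul_comm]; exact E.sm_bound x b)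

theorem norm_eq_of_star_mul_self_eq_ip {c : B} {ζ : E.X} (h : star c * c = E.ip ζ ζ) :
    ‖c‖ = ‖ζ‖ := by
  have hsq : ‖c‖ * ‖c‖ = ‖ζ‖ * ‖ζ‖ := by
    rw [← CStarRing.norm_star_mul_self, h, ← E.ip_norm, sq]
  exact (mul_self_inj_of_nonneg (norm_nonneg _) (norm_nonneg _)).mp hsq

variable {E} {ι : Type*} {g : ι → E.X} {f : ι → B}

theorem star_linearCombination_mul_linearCombination
    (hf : ∀ i j, star (f i) * f j = E.ip (g i) (g j)) (c d : ι →₀ ℂ) :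
    star (linearCombination ℂ f c) * linearCombination ℂ f d
      = E.ip (linearCombination ℂ g c) (linearCombination ℂ g d) := by
  induction c using Finsupp.induction_linear with
  | zero => simp only [map_zero, star_zero, zero_mul, ip_zero_left]
  | add c c' hc hc' => rw [map_add, map_add, star_add, add_mul, hc, hc', ip_add_left]
  | single i a =>
    induction d using Finsupp.induction_linear with
    | zero => rw [map_zero, map_zero, mul_zero, ← ipRight_apply, map_zero]
    | add d d' hd hd' => rw [map_add, map_add, mul_add, hd, hd', E.ip_add]
    | single j b =>
      rw [linearCombination_single, linearCombination_single, linearCombination_single,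
        linearCombination_single, star_smul, smul_mul_smul_comm, hf, ip_smul_left, E.ip_smul,
        smul_smul]
      rfl

theorem exists_linearIsometry_star_mul_eq_ip (hg : Dense (span ℂ (range g) : Set E.X))
    (hf : ∀ i j, star (f i) * f j = E.ip (g i) (g j)) :
    ∃ Φ : E.X →ₗᵢ[ℂ] B, (∀ i, Φ (g i) = f i) ∧ ∀ ζ η, star (Φ ζ) * Φ η = E.ip ζ η := by
  have hdense : DenseRange (linearCombination ℂ g) := by
    rwa [DenseRange, ← LinearMap.coe_range, range_linearCombination]
  have hbound : ∃ C, ∀ c, ‖linearCombination ℂ f c‖ ≤ C * ‖linearCombination ℂ g c‖ :=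
    ⟨1, fun c => by
      rw [one_mul, E.norm_eq_of_star_mul_self_eq_ip (star_linearCombination_mul_linearCombination hf c c)]⟩
  set Φ := (linearCombination ℂ f).extendOfNorm (linearCombination ℂ g)
  have hΦ : ∀ c, Φ (linearCombination ℂ g c) = linearCombination ℂ f c :=
    LinearMap.extendOfNorm_eq hdense hbound
  have hip : ∀ ζ η, star (Φ ζ) * Φ η = E.ip ζ η :=
    isClosed_property2 hdense (isClosed_eq (by fun_prop) E.continuous_ip) fun c d => by
      rw [hΦ, hΦ]
      exact star_linearCombination_mul_linearCombination hf c d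
  refine ⟨⟨Φ.toLinearMap, fun ζ => E.norm_eq_of_star_mul_self_eq_ip (hip ζ ζ)⟩, fun i => ?_, hip⟩
  simpa using hΦ (Finsupp.single i 1)

end Corr

theorem LinearIsometry.range_eq_clspan {F G : Type*} [NormedAddCommGroup F] [NormedSpace ℂ F]
    [CompleteSpace F] [NormedAddCommGroup G] [NormedSpace ℂ G] (Φ : F →ₗᵢ[ℂ] G) {ι : Type*}
    {g : ι → F} (hg : Dense (span ℂ (range g) : Set F)) :
    range Φ = clspan (range (Φ ∘ g)) := by
  calc range Φ = Φ '' closure (span ℂ (range g)) := by rw [hg.closure_eq, image_univ]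
    _ = closure (Φ '' span ℂ (range g)) := (Φ.isometry.isClosedEmbedding.closure_image_eq _).symm
    _ = clspan (range (Φ ∘ g)) := by
      rw [clspan, range_comp]
      exact congrArg closure (congrArg SetLike.coe (Submodule.map_span Φ.toLinearMap (range g)))

namespace TensorData

section PullCorr

variable {A B D : Type u} [NonUnitalCStarAlgebra A] [NonUnitalCStarAlgebra B]
  [NonUnitalCStarAlgebra D] {ψ : B → D} {E : Corr A B} {F : Corr B D} {T : Corr A D}
  (td : TensorData E F T) (pc : PullCorr ψ F)

theorem dense_span_mk2_u :
    Dense (span ℂ (range fun p : E.X × D => td.mk2 p.1 (pc.u p.2)) : Set T.X) := by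
  have hrange : range (fun p : E.X × D => td.mk2 p.1 (pc.u p.2))
      = range fun p : E.X × F.X => td.mk2 p.1 p.2 :=
    (Function.surjective_id.prodMap pc.bij.2).range_comp (fun p : E.X × F.X => td.mk2 p.1 p.2)
  rw [dense_iff_closure_eq, hrange]
  exact td.dense

theorem ip_mk2_u (x x' : E.X) (d d' : D) :
    T.ip (td.mk2 x (pc.u d)) (td.mk2 x' (pc.u d')) = star d * (ψ (E.ip x x') * d') := by
  rw [td.ip_mk, pc.la, pc.ip]

theorem sm_mk2_u (x : E.X) (d d' : D) : T.sm (td.mk2 x (pc.u d)) d' = td.mk2 x (pc.u (d * d')) := by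
  rw [td.sm_mk, pc.sm]

end PullCorr

section CorrRep

variable {A D : Type u} [NonUnitalCStarAlgebra A] [NonUnitalCStarAlgebra D] {E : Corr A A}
  {R : CorrRep E D} {F : Corr A D} {T : Corr A D} (td : TensorData E F T) (pc : PullCorr R.π F)
  {Φ : T.X →L[ℂ] D}

theorem apply_la_of_apply_mk2_u (hΦ : ∀ x d, Φ (td.mk2 x (pc.u d)) = R.t x * d) (a : A)
    (ζ : T.X) : Φ (T.la a ζ) = R.π a * Φ ζ := by
  have h : Φ ∘L T.lmul a = ContinuousLinearMap.mul ℂ D (R.π a) ∘L Φ := by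
    refine ContinuousLinearMap.ext_on (td.dense_span_mk2_u pc) ?_
    rintro _ ⟨⟨x, d⟩, rfl⟩
    show Φ (T.la a (td.mk2 x (pc.u d))) = R.π a * Φ (td.mk2 x (pc.u d))
    rw [td.la_mk, hΦ, hΦ, ← mul_assoc, R.mul_t]
  exact congr($h ζ)

theorem apply_sm_of_apply_mk2_u (hΦ : ∀ x d, Φ (td.mk2 x (pc.u d)) = R.t x * d) (ζ : T.X)
    (d' : D) : Φ (T.sm ζ d') = Φ ζ * d' := by
  have h : Φ ∘L T.rmul d' = (ContinuousLinearMap.mul ℂ D).flip d' ∘L Φ := by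
    refine ContinuousLinearMap.ext_on (td.dense_span_mk2_u pc) ?_
    rintro _ ⟨⟨x, d⟩, rfl⟩
    show Φ (T.sm (td.mk2 x (pc.u d)) d') = Φ (td.mk2 x (pc.u d)) * d'
    rw [td.sm_mk2_u, hΦ, hΦ, mul_assoc]
  exact congr($h ζ)

end CorrRep

end TensorData

theorem CorrRep.star_t_mul_mul_t_mul {A D : Type u} [NonUnitalCStarAlgebra A]
    [NonUnitalCStarAlgebra D] {E : Corr A A} (R : CorrRep E D) (x x' : E.X) (d d' : D) :
    star (R.t x * d) * (R.t x' * d') = star d * (R.π (E.ip x x') * d') := by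
  rw [star_mul, mul_assoc, ← mul_assoc (star (R.t x)), R.t_mul]

/-- For a correspondence `X` over `A` with universal covariant
representation `(Υ, t)` generating `O_X`, the map determined by `x ⊗ S ↦ t(x)S`
is an isomorphism of `A–O_X` correspondences from `X ⊗_A O_X` onto the closed
subspace `cl span { t(x)S : x ∈ X, S ∈ O_X }` of `O_X`. -/
theorem tensor_with_OX_iso_onto_tX_OX
    (A : Type u) [NonUnitalCStarAlgebra A] (E : Corr A A)
    (CP : CuntzPimsner E)
    -- O_X as an A–O_X correspondence via Υ and right multiplication
    (OXc : Corr A CP.O) (pc : PullCorr CP.rep.π OXc)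
    -- the tensor product X ⊗_A O_X
    (TT : Corr A CP.O) (td : TensorData E OXc TT) :
    ∃ Φ : TT.X → CP.O,
      (∀ ζ η : TT.X, Φ (ζ + η) = Φ ζ + Φ η) ∧
      (∀ (c : ℂ) (ζ : TT.X), Φ (c • ζ) = c • Φ ζ) ∧
      (∀ ζ η : TT.X, star (Φ ζ) * Φ η = TT.ip ζ η) ∧
      (∀ (a : A) (ζ : TT.X), Φ (TT.la a ζ) = CP.rep.π a * Φ ζ) ∧
      (∀ (ζ : TT.X) (S : CP.O), Φ (TT.sm ζ S) = Φ ζ * S) ∧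
      (∀ (x : E.X) (S : CP.O), Φ (td.mk2 x (pc.u S)) = CP.rep.t x * S) ∧
      Function.Injective Φ ∧
      Set.range Φ = clspan {z : CP.O | ∃ (x : E.X) (S : CP.O), z = CP.rep.t x * S} := by
  obtain ⟨Φ, hΦ, hΦip⟩ := TT.exists_linearIsometry_star_mul_eq_ip (td.dense_span_mk2_u pc)
    (f := fun p : E.X × CP.O => CP.rep.t p.1 * p.2)
    fun p q => by rw [td.ip_mk2_u, CP.rep.star_t_mul_mul_t_mul]
  have hΦmk : ∀ x S, Φ (td.mk2 x (pc.u S)) = CP.rep.t x * S := fun x S => hΦ (x, S)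
  refine ⟨Φ, map_add Φ, map_smul Φ, hΦip,
    td.apply_la_of_apply_mk2_u pc (Φ := Φ.toContinuousLinearMap) hΦmk,
    td.apply_sm_of_apply_mk2_u pc (Φ := Φ.toContinuousLinearMap) hΦmk, hΦmk, Φ.injective, ?_⟩
  rw [Φ.range_eq_clspan (td.dense_span_mk2_u pc)]
  congr 1
  ext z
  simp [hΦmk, eq_comm]

end
end

section
/- Let X be a C*-correspondence over A with universal covariant representation (Υ, t). Then J_X·O_X ⊆ cl span{t(x)S : x ∈ X, S ∈ O_X}. Moreover, if X is regular, then the map determined by x ⊗ S ↦ t(x)S is an isomorphism of A–O_X correspondences from X ⊗_A O_X onto O_X. -/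
noncomputable section

universe u

/-! Covariance approximates `π(a)`, `a ∈ J_X`, by sums `∑ t(xᵢ)t(yᵢ)*`, so `π(a)S` lies
in the closed right ideal spanned by the `t(x)S`. In the regular case `J_X = A`, so this
right ideal contains `π(A)`, `t(X)` and `t(X)*`, hence all of `O_X`. The pairs
`(x ⊗ S, t(x)S)` span a closed subspace of `(X ⊗ O_X) × O_X` on which
`⟨ζ, η⟩ = Φ(ζ)*Φ(η)`; both projections are then isometric with dense range, so it is the
graph of a unitary `X ⊗ O_X ≅ O_X`. -/

open Set Submodule

section Graph

variable {𝕜 E F : Type*} [NormedField 𝕜] [NormedAddCommGroup E] [NormedSpace 𝕜 E]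
  [NormedAddCommGroup F] [NormedSpace 𝕜 F]

theorem LinearIsometry.surjective_of_denseRange {G : Type*} [NormedAddCommGroup G]
    [NormedSpace 𝕜 G] [CompleteSpace G] (f : G →ₗᵢ[𝕜] E) (hf : DenseRange f) :
    Function.Surjective f := by
  rw [← Set.range_eq_univ, ← hf.closure_range]
  exact f.isometry.isClosedEmbedding.isClosed_range.closure_eq.symm

namespace Submodule

variable (Γ : Submodule 𝕜 (E × F)) (hnorm : ∀ v ∈ Γ, ‖v.2‖ = ‖v.1‖)
include hnorm

def fstIsometry : Γ →ₗᵢ[𝕜] E where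
  toLinearMap := (LinearMap.fst 𝕜 E F).comp Γ.subtype
  norm_map' v := by simp [Prod.norm_def, hnorm v v.2]

def sndIsometry : Γ →ₗᵢ[𝕜] F where
  toLinearMap := (LinearMap.snd 𝕜 E F).comp Γ.subtype
  norm_map' v := by simp [Prod.norm_def, hnorm v v.2]

variable [CompleteSpace E] [CompleteSpace F] (hΓ : IsClosed (Γ : Set (E × F)))
  (hfst : Dense (Prod.fst '' (Γ : Set (E × F)))) (hsnd : Dense (Prod.snd '' (Γ : Set (E × F))))

noncomputable def fstIsometryEquiv : Γ ≃ₗᵢ[𝕜] E :=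
  haveI := hΓ.completeSpace_coe
  .ofSurjective (Γ.fstIsometry hnorm)
    ((Γ.fstIsometry hnorm).surjective_of_denseRange (by rwa [image_eq_range] at hfst))

noncomputable def sndIsometryEquiv : Γ ≃ₗᵢ[𝕜] F :=
  haveI := hΓ.completeSpace_coe
  .ofSurjective (Γ.sndIsometry hnorm)
    ((Γ.sndIsometry hnorm).surjective_of_denseRange (by rwa [image_eq_range] at hsnd))

noncomputable def graphIsometryEquiv : E ≃ₗᵢ[𝕜] F :=
  (Γ.fstIsometryEquiv hnorm hΓ hfst).symm.trans (Γ.sndIsometryEquiv hnorm hΓ hsnd)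

theorem mk_graphIsometryEquiv_mem (x : E) :
    (x, Γ.graphIsometryEquiv hnorm hΓ hfst hsnd x) ∈ Γ := by
  let w := (Γ.fstIsometryEquiv hnorm hΓ hfst).symm x
  have hw : (w : E × F).1 = x := (Γ.fstIsometryEquiv hnorm hΓ hfst).apply_symm_apply x
  convert w.2 using 1
  exact Prod.ext hw.symm rfl

theorem graphIsometryEquiv_apply_fst {v : E × F} (hv : v ∈ Γ) :
    Γ.graphIsometryEquiv hnorm hΓ hfst hsnd v.1 = v.2 := by
  have hsymm : (Γ.fstIsometryEquiv hnorm hΓ hfst).symm v.1 = ⟨v, hv⟩ :=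
    LinearIsometryEquiv.symm_apply_eq _ |>.mpr rfl
  simp only [graphIsometryEquiv, LinearIsometryEquiv.trans_apply, hsymm]
  rfl

end Submodule

end Graph

theorem ContinuousLinearMap.mapsTo_clspan {σ : ℂ →+* ℂ} {M N : Type*} [TopologicalSpace M]
    [AddCommMonoid M] [Module ℂ M] [TopologicalSpace N] [AddCommMonoid N] [Module ℂ N]
    (f : M →SL[σ] N) {s : Set M} {K : Submodule ℂ N} (hK : IsClosed (K : Set N))
    (h : MapsTo f s K) : MapsTo f (clspan s) K :=
  closure_minimal (span_le (p := K.comap (f : M →ₛₗ[σ] N)) |>.mpr h)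
    (hK.preimage f.continuous)

theorem dense_of_clspan_eq_univ {V : Type*} [TopologicalSpace V] [AddCommMonoid V] [Module ℂ V]
    {s : Set V} (hs : clspan s = univ) {p : Submodule ℂ V} (h : s ⊆ p) : Dense (p : Set V) := by
  rw [dense_iff_closure_eq, eq_univ_iff_forall]
  intro x
  have hx : x ∈ clspan s := hs ▸ mem_univ x
  exact closure_mono (span_le.mpr h) hx

namespace Corr

variable {A B : Type u} [NonUnitalCStarAlgebra A] [NonUnitalCStarAlgebra B] (W : Corr A B)

def ipCLM (x : W.X) : W.X →L[ℂ] B :=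
  LinearMap.mkContinuous
    { toFun := W.ip x
      map_add' := W.ip_add x
      map_smul' := fun c y => W.ip_smul c x y } ‖x‖ (W.ip_bound x)

def smCLM (b : B) : W.X →L[ℂ] W.X :=
  LinearMap.mkContinuous
    { toFun := fun x => W.sm x b
      map_add' := fun x y => W.sm_add x y b
      map_smul' := fun c x => W.sm_smul c x b } ‖b‖
    (fun x => by rw [mul_comm]; exact W.sm_bound x b)

theorem la_zero_left (x : W.X) : W.la 0 x = 0 := by
  simpa using W.la_smul' 0 0 x

theorem apply_mem_of_forall_la_mem {σ : ℂ →+* ℂ} {N : Type*} [TopologicalSpace N]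
    [AddCommMonoid N] [Module ℂ N] (f : W.X →SL[σ] N) {K : Submodule ℂ N}
    (hK : IsClosed (K : Set N)) (h : ∀ a x, f (W.la a x) ∈ K) (x : W.X) : f x ∈ K := by
  refine f.mapsTo_clspan hK ?_ (W.nondeg.symm ▸ mem_univ x : x ∈ _)
  rintro _ ⟨a, x, rfl⟩
  exact h a x

theorem Regular.mem_katsuraIdeal {E : Corr A A} (hE : E.Regular) (a : A) :
    a ∈ E.katsuraIdeal := by
  refine ⟨hE.2 a, fun b hb => ?_⟩
  obtain rfl : b = 0 := hE.1 (hb.trans (ContinuousLinearMap.ext fun x => (E.la_zero_left x).symm))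
  exact mul_zero a

end Corr

namespace CorrRep

variable {A D : Type u} [NonUnitalCStarAlgebra A] [NonUnitalCStarAlgebra D] {E : Corr A A}
  (R : CorrRep E D)

def πHom : A →⋆ₙₐ[ℂ] D where
  toFun := R.π
  map_smul' := R.π_smul
  map_zero' := by simpa using R.π_smul 0 0
  map_add' := R.π_add
  map_mul' := R.π_mul
  map_star' := R.π_star

theorem norm_t_le (x : E.X) : ‖R.t x‖ ≤ ‖x‖ := by
  have hsq : ‖R.t x‖ ^ 2 ≤ ‖x‖ ^ 2 := by
    calc ‖R.t x‖ ^ 2 = ‖star (R.t x) * R.t x‖ := by rw [CStarRing.norm_star_mul_self, sq]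
      _ = ‖R.π (E.ip x x)‖ := by rw [R.t_mul]
      _ ≤ ‖E.ip x x‖ := NonUnitalStarAlgHom.norm_apply_le R.πHom _
      _ = ‖x‖ ^ 2 := (E.ip_norm x).symm
  exact le_of_sq_le_sq hsq (norm_nonneg x)

def tCLM : E.X →L[ℂ] D :=
  LinearMap.mkContinuous
    { toFun := R.t
      map_add' := R.t_add
      map_smul' := R.t_smul } 1
    (fun x => by rw [one_mul]; exact R.norm_t_le x)

def tIdeal : Submodule ℂ D :=
  (span ℂ {z : D | ∃ (x : E.X) (S' : D), z = R.t x * S'}).topologicalClosure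

theorem coe_tIdeal :
    (R.tIdeal : Set D) = clspan {z : D | ∃ (x : E.X) (S' : D), z = R.t x * S'} := rfl

theorem isClosed_tIdeal : IsClosed (R.tIdeal : Set D) :=
  isClosed_topologicalClosure _

theorem t_mul_mem_tIdeal (x : E.X) (S : D) : R.t x * S ∈ R.tIdeal :=
  le_topologicalClosure _ (subset_span ⟨x, S, rfl⟩)

theorem mul_mem_tIdeal {p : D} (hp : p ∈ R.tIdeal) (S : D) : p * S ∈ R.tIdeal := by
  refine ((ContinuousLinearMap.mul ℂ D).flip S).mapsTo_clspan R.isClosed_tIdeal ?_ hp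
  rintro _ ⟨x, S', rfl⟩
  simpa [mul_assoc] using R.t_mul_mem_tIdeal x (S' * S)

theorem Covariant.π_mem_tIdeal {R : CorrRep E D} (hR : R.Covariant) {a : A}
    (ha : a ∈ E.katsuraIdeal) : R.π a ∈ R.tIdeal := by
  refine Metric.mem_closure_iff.mpr fun ε hε => ?_
  obtain ⟨k, x, y, -, hclose⟩ := hR a ha ε hε
  refine ⟨∑ i, R.t (x i) * star (R.t (y i)), sum_mem fun i _ => ?_, by rwa [dist_eq_norm]⟩
  exact subset_span ⟨x i, star (R.t (y i)), rfl⟩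

variable {R} (hπ : ∀ a, R.π a ∈ R.tIdeal)
include hπ

theorem t_mem_tIdeal (x : E.X) : R.t x ∈ R.tIdeal :=
  E.apply_mem_of_forall_la_mem R.tCLM R.isClosed_tIdeal
    (fun a x => by simpa [tCLM, R.mul_t] using R.mul_mem_tIdeal (hπ a) (R.t x)) x

theorem star_t_mul_mem_tIdeal (y : E.X) {p : D} (hp : p ∈ R.tIdeal) :
    star (R.t y) * p ∈ R.tIdeal := by
  refine (ContinuousLinearMap.mul ℂ D (star (R.t y))).mapsTo_clspan R.isClosed_tIdeal ?_ hp
  rintro _ ⟨x, S, rfl⟩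
  simpa [← mul_assoc, R.t_mul] using R.mul_mem_tIdeal (hπ (E.ip y x)) S

theorem star_t_mem_tIdeal (x : E.X) : star (R.t x) ∈ R.tIdeal := by
  refine E.apply_mem_of_forall_la_mem
    ((starL ℂ : D ≃L⋆[ℂ] D).toContinuousLinearMap.comp R.tCLM) R.isClosed_tIdeal
    (fun a x => ?_) x
  simpa [tCLM, ← R.mul_t, R.π_star] using star_t_mul_mem_tIdeal hπ x (hπ (star a))

end CorrRep

theorem CuntzPimsner.clspan_t_mul_eq_univ {A : Type u} [NonUnitalCStarAlgebra A] {E : Corr A A}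
    (CP : CuntzPimsner E) (hE : E.Regular) :
    clspan {z : CP.O | ∃ (x : E.X) (S' : CP.O), z = CP.rep.t x * S'} = univ := by
  have hπ (a : A) : CP.rep.π a ∈ CP.rep.tIdeal :=
    CP.covariant.π_mem_tIdeal (hE.mem_katsuraIdeal a)
  rw [← CP.rep.coe_tIdeal, eq_univ_iff_forall]
  refine fun S => closure_minimal (fun z hz => ?_) CP.rep.isClosed_tIdeal
    (CP.generates.closure_eq.symm ▸ mem_univ S : S ∈ closure _)
  refine NonUnitalAlgebra.adjoin_induction (fun w hw => ?_) (fun _ _ _ _ => add_mem) (zero_mem _)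
    (fun _ v _ _ hu _ => CP.rep.mul_mem_tIdeal hu v) (fun c _ _ => smul_mem _ c) hz
  rcases hw with (⟨a, rfl⟩ | ⟨x, rfl⟩) | (⟨a, ha⟩ | ⟨x, hx⟩)
  · exact hπ a
  · exact CorrRep.t_mem_tIdeal hπ x
  · rw [← star_star w, ← ha, ← CP.rep.π_star]
    exact hπ (star a)
  · rw [← star_star w, ← hx]
    exact CorrRep.star_t_mem_tIdeal hπ x

namespace TensorData

variable {A D : Type u} [NonUnitalCStarAlgebra A] [NonUnitalCStarAlgebra D] {E : Corr A A}
  {R : CorrRep E D} {OD T : Corr A D} (td : TensorData E OD T) (pc : PullCorr R.π OD)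

def tMulPairs : Set (T.X × D) :=
  {v | ∃ (x : E.X) (S : D), v = (td.mk2 x (pc.u S), R.t x * S)}

def tMulGraph : Submodule ℂ (T.X × D) :=
  (span ℂ (td.tMulPairs pc)).topologicalClosure

theorem isClosed_tMulGraph : IsClosed (td.tMulGraph pc : Set (T.X × D)) :=
  isClosed_topologicalClosure _

theorem mk_mem_tMulGraph (x : E.X) (S : D) : (td.mk2 x (pc.u S), R.t x * S) ∈ td.tMulGraph pc :=
  le_topologicalClosure _ (subset_span ⟨x, S, rfl⟩)

theorem star_mul_eq_ip_of_mem_tMulGraph {v w : T.X × D} (hv : v ∈ td.tMulGraph pc)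
    (hw : w ∈ td.tMulGraph pc) : star v.2 * w.2 = T.ip v.1 w.1 := by
  -- both sides are continuous and linear in `w`, and swap under `star`
  have extend (v : T.X × D) (h : ∀ w ∈ td.tMulPairs pc, star v.2 * w.2 = T.ip v.1 w.1) :
      ∀ w ∈ td.tMulGraph pc, star v.2 * w.2 = T.ip v.1 w.1 := fun _ hw =>
    ContinuousLinearMap.eqOn_closure_span
      (f := (ContinuousLinearMap.mul ℂ D (star v.2)).comp (.snd ℂ T.X D))
      (g := (T.ipCLM v.1).comp (.fst ℂ T.X D)) h hw
  have swap {v w : T.X × D} (h : star v.2 * w.2 = T.ip v.1 w.1) :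
      star w.2 * v.2 = T.ip w.1 v.1 := by
    rw [← T.ip_star, ← h, star_mul, star_star]
  have generators (x x' : E.X) (S S' : D) :
      star (R.t x * S) * (R.t x' * S') = T.ip (td.mk2 x (pc.u S)) (td.mk2 x' (pc.u S')) := by
    rw [td.ip_mk, pc.la, pc.ip, star_mul, ← R.t_mul]
    simp only [mul_assoc]
  refine extend v (fun u hu => swap (extend u (fun u' hu' => ?_) v hv)) w hw
  obtain ⟨x, S, rfl⟩ := hu
  obtain ⟨x', S', rfl⟩ := hu'
  exact generators x x' S S'

theorem norm_snd_eq_norm_fst_of_mem_tMulGraph {v : T.X × D} (hv : v ∈ td.tMulGraph pc) :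
    ‖v.2‖ = ‖v.1‖ := by
  have hsq : ‖v.2‖ ^ 2 = ‖v.1‖ ^ 2 := by
    rw [T.ip_norm, ← td.star_mul_eq_ip_of_mem_tMulGraph pc hv hv, CStarRing.norm_star_mul_self,
      sq]
  exact (pow_left_inj₀ (norm_nonneg _) (norm_nonneg _) two_ne_zero).mp hsq

theorem la_mem_tMulGraph (a : A) {v : T.X × D} (hv : v ∈ td.tMulGraph pc) :
    (T.la a v.1, R.π a * v.2) ∈ td.tMulGraph pc := by
  refine ((T.lmul a).prodMap (ContinuousLinearMap.mul ℂ D (R.π a))).mapsTo_clspan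
    (td.isClosed_tMulGraph pc) ?_ hv
  rintro _ ⟨x, S, rfl⟩
  simpa [Corr.lmul, td.la_mk, ← mul_assoc, R.mul_t] using td.mk_mem_tMulGraph pc (E.la a x) S

theorem sm_mem_tMulGraph (S : D) {v : T.X × D} (hv : v ∈ td.tMulGraph pc) :
    (T.sm v.1 S, v.2 * S) ∈ td.tMulGraph pc := by
  refine ((T.smCLM S).prodMap ((ContinuousLinearMap.mul ℂ D).flip S)).mapsTo_clspan
    (td.isClosed_tMulGraph pc) ?_ hv
  rintro _ ⟨x, S', rfl⟩
  simpa [Corr.smCLM, td.sm_mk, pc.sm, mul_assoc] using td.mk_mem_tMulGraph pc x (S' * S)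

theorem dense_fst_tMulGraph : Dense (Prod.fst '' (td.tMulGraph pc : Set (T.X × D))) := by
  have h := dense_of_clspan_eq_univ td.dense
    (p := (td.tMulGraph pc).map (LinearMap.fst ℂ T.X D)) ?_
  · rwa [map_coe, LinearMap.coe_fst] at h
  · rintro _ ⟨⟨x, y⟩, rfl⟩
    obtain ⟨S, rfl⟩ := pc.bij.2 y
    exact ⟨_, td.mk_mem_tMulGraph pc x S, rfl⟩

theorem dense_snd_tMulGraph
    (hR : clspan {z : D | ∃ (x : E.X) (S' : D), z = R.t x * S'} = univ) :
    Dense (Prod.snd '' (td.tMulGraph pc : Set (T.X × D))) := by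
  have h := dense_of_clspan_eq_univ hR
    (p := (td.tMulGraph pc).map (LinearMap.snd ℂ T.X D)) ?_
  · rwa [map_coe, LinearMap.coe_snd] at h
  · rintro _ ⟨x, S, rfl⟩
    exact ⟨_, td.mk_mem_tMulGraph pc x S, rfl⟩

noncomputable def tMulEquiv (hR : clspan {z : D | ∃ (x : E.X) (S' : D), z = R.t x * S'} = univ) :
    T.X ≃ₗᵢ[ℂ] D :=
  (td.tMulGraph pc).graphIsometryEquiv (fun _ => td.norm_snd_eq_norm_fst_of_mem_tMulGraph pc)
    (td.isClosed_tMulGraph pc) (td.dense_fst_tMulGraph pc) (td.dense_snd_tMulGraph pc hR)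

end TensorData

/-- For a correspondence `X` over `A` with universal covariant
representation `(Υ, t)`: `J_X · O_X ⊆ cl span { t(x)S }`, and if `X` is regular then
the map determined by `x ⊗ S ↦ t(x)S` is an isomorphism of `A–O_X` correspondences
from `X ⊗_A O_X` onto `O_X`. -/
theorem katsura_acts_into_tX_OX_and_regular_case
    (A : Type u) [NonUnitalCStarAlgebra A] (E : Corr A A)
    (CP : CuntzPimsner E)
    -- O_X as an A–O_X correspondence via Υ and right multiplication
    (OXc : Corr A CP.O) (pc : PullCorr CP.rep.π OXc)
    -- the tensor product X ⊗_A O_X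
    (TT : Corr A CP.O) (td : TensorData E OXc TT) :
    (∀ a ∈ E.katsuraIdeal, ∀ S : CP.O,
      CP.rep.π a * S ∈ clspan {z : CP.O | ∃ (x : E.X) (S' : CP.O), z = CP.rep.t x * S'}) ∧
    (E.Regular →
      ∃ Φ : TT.X → CP.O,
        (∀ ζ η : TT.X, Φ (ζ + η) = Φ ζ + Φ η) ∧
        (∀ (c : ℂ) (ζ : TT.X), Φ (c • ζ) = c • Φ ζ) ∧
        (∀ ζ η : TT.X, star (Φ ζ) * Φ η = TT.ip ζ η) ∧
        (∀ (a : A) (ζ : TT.X), Φ (TT.la a ζ) = CP.rep.π a * Φ ζ) ∧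
        (∀ (ζ : TT.X) (S : CP.O), Φ (TT.sm ζ S) = Φ ζ * S) ∧
        (∀ (x : E.X) (S : CP.O), Φ (td.mk2 x (pc.u S)) = CP.rep.t x * S) ∧
        Function.Bijective Φ) := by
  refine ⟨fun a ha S => CP.rep.mul_mem_tIdeal (CP.covariant.π_mem_tIdeal ha) S, fun hE => ?_⟩
  let Φ := td.tMulEquiv pc (CP.clspan_t_mul_eq_univ hE)
  have graph_mem (ζ : TT.X) : (ζ, Φ ζ) ∈ td.tMulGraph pc := mk_graphIsometryEquiv_mem ..
  have apply_fst {v : TT.X × CP.O} (hv : v ∈ td.tMulGraph pc) : Φ v.1 = v.2 :=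
    graphIsometryEquiv_apply_fst _ _ _ _ _ hv
  refine ⟨Φ, map_add Φ, map_smul Φ, fun ζ η => ?_, fun a ζ => ?_, fun ζ S => ?_,
    fun x S => ?_, Φ.bijective⟩
  · exact td.star_mul_eq_ip_of_mem_tMulGraph pc (graph_mem ζ) (graph_mem η)
  · exact apply_fst (td.la_mem_tMulGraph pc a (graph_mem ζ))
  · exact apply_fst (td.sm_mem_tMulGraph pc S (graph_mem ζ))
  · exact apply_fst (td.mk_mem_tMulGraph pc x S)

end
end
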